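/- Fix an integer n ≥ 1 and a symmetric-form matrix W with β = −α and a1+b1+n·(a2+b2) = 0. Then ‖W‖_* = (n−1)·√(2·(a1²+b1²)+2·|a1²−b1²|) + 2·√((a1+n·a2)²+n·α²), and moreover (n−1)·√(2·(a1²+b1²)+2·|a1²−b1²|) = 2·(n−1)·max{|a1|,|b1|}. -/

import Mathlib

/-- The nuclear norm of a real matrix: the trace of the positive semidefinite
square root of `Wᵀ * W` (equivalently, the sum of the singular values of `W`). -/
noncomputable def nuclearNorm {m k : Type*} [Fintype m] [Fintype k] [DecidableEq k]
    (W : Matrix m k ℝ) : ℝ :=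
  (((Matrix.posSemidef_conjTranspose_mul_self W).1.eigenvectorUnitary : Matrix k k ℝ) *
    Matrix.diagonal ((√·) ∘ (Matrix.posSemidef_conjTranspose_mul_self W).1.eigenvalues) *
    (star (Matrix.posSemidef_conjTranspose_mul_self W).1.eigenvectorUnitary : Matrix k k ℝ)).trace

/-- The symmetric-form matrix in `ℝ^{(2n+2)×(2n)}`.  Rows are indexed by the input
tokens `a_1,…,a_n` (`Sum.inl i`), `b_1,…,b_n` (`Sum.inr (Sum.inl i)`) and the relation
tokens `r_1, r_2` (`Sum.inr (Sum.inr k)`, `k = 0, 1`); columns by the output tokens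
`b_1,…,b_n` (`Sum.inl j`) and `c_1,…,c_n` (`Sum.inr j`). -/
def symW (n : ℕ) (a1 a2 b1 b2 α β : ℝ) :
    Matrix (Fin n ⊕ Fin n ⊕ Fin 2) (Fin n ⊕ Fin n) ℝ :=
  fun r y =>
    match r, y with
    | Sum.inl i, Sum.inl j => (if i = j then a1 else 0) + a2
    | Sum.inl i, Sum.inr j => (if i = j then b1 else 0) + b2
    | Sum.inr (Sum.inl i), Sum.inl j => (if i = j then b1 else 0) + b2
    | Sum.inr (Sum.inl i), Sum.inr j => (if i = j then a1 else 0) + a2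
    | Sum.inr (Sum.inr k), Sum.inl _ => if k = 0 then α else β
    | Sum.inr (Sum.inr k), Sum.inr _ => if k = 0 then β else α

/-!
`WᵀW` has the block form `[[A, B], [B, A]]` with `A`, `B` combinations of `1` and the all-ones
matrix `J`, so it acts diagonally on the vectors `(v, v)` and `(v, -v)` with `v` either constant
or orthogonal to the constants. The eigenvalues there are `(a1 + b1)²` and `(a1 - b1)²` (each
of multiplicity `n - 1`), `4 ((a1 + n a2)² + n α²)` on `(1, -1)`, and
`(a1 + b1 + n (a2 + b2))² = 0` on `(1, 1)`. Taking square roots eigenvalue by eigenvalue gives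
an explicit positive semidefinite `S` with `S² = WᵀW`, and the nuclear norm is `tr S`. Finally
`2 (a1² + b1²) + 2 |a1² - b1²| = (|a1 + b1| + |a1 - b1|)²` and
`|a1 + b1| + |a1 - b1| = 2 max |a1| |b1|`.
-/

open Matrix
open scoped ComplexOrder

namespace Matrix

section Sym2Block

variable {m R : Type*}

def sym2Block (X Y : Matrix m m R) : Matrix (m ⊕ m) (m ⊕ m) R := fromBlocks X Y Y X

theorem sym2Block_mul [Fintype m] [NonUnitalNonAssocSemiring R] (X Y X' Y' : Matrix m m R) :
    sym2Block X Y * sym2Block X' Y' = sym2Block (X * X' + Y * Y') (X * Y' + Y * X') := by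
  simp only [sym2Block, fromBlocks_multiply, add_comm (Y * X'), add_comm (Y * Y')]

theorem trace_sym2Block [Fintype m] [AddCommMonoid R] (X Y : Matrix m m R) :
    (sym2Block X Y).trace = 2 • X.trace := by
  simp [sym2Block, trace, Fintype.sum_sum_type, two_nsmul]

theorem PosSemidef.sym2Block {𝕜 : Type*} [RCLike 𝕜] [Fintype m] [DecidableEq m]
    {X Y : Matrix m m 𝕜} (hp : (X + Y).PosSemidef) (hm : (X - Y).PosSemidef) :
    (Matrix.sym2Block X Y).PosSemidef := by
  let Bp : Matrix m (m ⊕ m) 𝕜 := fromCols 1 1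
  let Bm : Matrix m (m ⊕ m) 𝕜 := fromCols 1 (-1)
  have key : Matrix.sym2Block X Y =
      (2⁻¹ : 𝕜) • (Bpᴴ * (X + Y) * Bp) + (2⁻¹ : 𝕜) • (Bmᴴ * (X - Y) * Bm) := by
    rw [conjTranspose_fromCols_eq_fromRows_conjTranspose,
      conjTranspose_fromCols_eq_fromRows_conjTranspose, fromRows_mul (B := X + Y),
      fromRows_mul (B := X - Y), fromRows_mul_fromCols, fromRows_mul_fromCols]
    simp only [Matrix.sym2Block, fromBlocks_smul, fromBlocks_add]
    congr 1 <;> simp <;> module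
  have h2 : (0 : 𝕜) ≤ 2⁻¹ := by positivity
  rw [key]
  exact ((hp.conjTranspose_mul_mul_same _).smul h2).add
    ((hm.conjTranspose_mul_mul_same _).smul h2)

end Sym2Block

section ConstSplit

variable (ι : Type*) {𝕜 : Type*} [Fintype ι] [RCLike 𝕜]

variable (𝕜) in
/-- `J / card ι`, the orthogonal projection onto the constant vectors. -/
noncomputable def constProj : Matrix ι ι 𝕜 := of fun _ _ => (Fintype.card ι : 𝕜)⁻¹

variable {ι}

theorem constProj_mul_self [Nonempty ι] :
    constProj ι 𝕜 * constProj ι 𝕜 = constProj ι 𝕜 := by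
  ext i j
  simp [constProj, mul_apply]

theorem isStarProjection_constProj [Nonempty ι] : IsStarProjection (constProj ι 𝕜) :=
  ⟨constProj_mul_self, by ext; simp [constProj]⟩

theorem trace_constProj [Nonempty ι] : (constProj ι 𝕜).trace = 1 := by
  simp [constProj, trace]

theorem of_one_eq_card_smul_constProj [Nonempty ι] :
    (of fun _ _ => 1 : Matrix ι ι 𝕜) = (Fintype.card ι : 𝕜) • constProj ι 𝕜 := by
  ext i j
  simp [constProj]

variable [DecidableEq ι]

variable (ι) in
noncomputable def constSplit (c d : 𝕜) : Matrix ι ι 𝕜 :=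
  c • (1 - constProj ι 𝕜) + d • constProj ι 𝕜

theorem smul_one_add_smul_of_one [Nonempty ι] (c d : 𝕜) :
    c • (1 : Matrix ι ι 𝕜) + d • of (fun _ _ => 1) =
      constSplit ι c (c + Fintype.card ι * d) := by
  rw [of_one_eq_card_smul_constProj, constSplit]
  module

theorem constSplit_mul [Nonempty ι] (c d c' d' : 𝕜) :
    constSplit ι c d * constSplit ι c' d' = constSplit ι (c * c') (d * d') := by
  have hE := constProj_mul_self (ι := ι) (𝕜 := 𝕜)
  simp only [constSplit, add_mul, mul_add, sub_mul, mul_sub, smul_mul, Matrix.mul_smul, hE,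
    Matrix.one_mul, Matrix.mul_one, smul_smul]
  module

theorem constSplit_add (c d c' d' : 𝕜) :
    constSplit ι c d + constSplit ι c' d' = constSplit ι (c + c') (d + d') := by
  simp only [constSplit]
  module

theorem constSplit_sub (c d c' d' : 𝕜) :
    constSplit ι c d - constSplit ι c' d' = constSplit ι (c - c') (d - d') := by
  simp only [constSplit]
  module

open scoped MatrixOrder in
theorem posSemidef_constSplit [Nonempty ι] {c d : 𝕜} (hc : 0 ≤ c) (hd : 0 ≤ d) :
    (constSplit ι c d).PosSemidef := by
  have hE := isStarProjection_constProj (ι := ι) (𝕜 := 𝕜)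
  exact ((nonneg_iff_posSemidef.mp hE.one_sub.nonneg).smul hc).add
    ((nonneg_iff_posSemidef.mp hE.nonneg).smul hd)

theorem trace_constSplit [Nonempty ι] (c d : 𝕜) :
    (constSplit ι c d).trace = c * (Fintype.card ι - 1) + d := by
  simp [constSplit, trace_sub, trace_constProj]

end ConstSplit

end Matrix

theorem nuclearNorm_eq_trace_of_mul_self_eq {m k : Type*} [Fintype m] [Fintype k] [DecidableEq k]
    {W : Matrix m k ℝ} {S : Matrix k k ℝ} (hS : S.PosSemidef) (hSW : S * S = Wᴴ * W) :
    nuclearNorm W = S.trace := by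
  have hsqrt : (posSemidef_conjTranspose_mul_self W).1.cfc Real.sqrt = S := by
    rw [← IsHermitian.cfc_eq, ← hSW, ← sq,
      ← cfc_comp_pow (ha := hS.1.isSelfAdjoint) Real.sqrt 2 S]
    have hspec := (posSemidef_iff_isHermitian_and_spectrum_nonneg.mp hS).2
    rw [cfc_congr (g := id) (fun x hx => by simp [Real.sqrt_sq (hspec hx)])]
    exact cfc_id ℝ S hS.1.isSelfAdjoint
  rw [nuclearNorm, ← hsqrt, IsHermitian.cfc, Unitary.conjStarAlgAut_apply]
  rfl

theorem conjTranspose_symW_mul_symW (n : ℕ) (a1 a2 b1 b2 α β : ℝ) :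
    (symW n a1 a2 b1 b2 α β)ᴴ * symW n a1 a2 b1 b2 α β =
      sym2Block
        ((a1 ^ 2 + b1 ^ 2) • 1 +
          (2 * a1 * a2 + 2 * b1 * b2 + n * (a2 ^ 2 + b2 ^ 2) + α ^ 2 + β ^ 2) • of fun _ _ => 1)
        ((2 * a1 * b1) • 1 +
          (2 * (a1 * b2 + a2 * b1) + 2 * n * a2 * b2 + 2 * α * β) • of fun _ _ => 1) := by
  ext (i | i) (j | j) <;>
    simp [Matrix.mul_apply, symW, sym2Block, Fintype.sum_sum_type, Fin.sum_univ_two,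
      Matrix.one_apply, add_mul, mul_add, Finset.sum_add_distrib, mul_ite, ite_mul] <;>
    by_cases h : i = j <;> simp [h, Ne.symm] <;> ring

theorem abs_add_add_abs_sub {α : Type*} [Field α] [LinearOrder α] [IsStrictOrderedRing α]
    (a b : α) : |a + b| + |a - b| = 2 * max |a| |b| := by
  rcases abs_cases a with ⟨ha, ha'⟩ | ⟨ha, ha'⟩ <;>
    rcases abs_cases b with ⟨hb, hb'⟩ | ⟨hb, hb'⟩ <;>
    rcases abs_cases (a + b) with ⟨h1, h1'⟩ | ⟨h1, h1'⟩ <;>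
    rcases abs_cases (a - b) with ⟨h2, h2'⟩ | ⟨h2, h2'⟩ <;>
    rcases max_cases |a| |b| with ⟨hm, hm'⟩ | ⟨hm, hm'⟩ <;>
    linarith

theorem Real.sqrt_two_mul_add_two_mul_abs_sq_sub (a b : ℝ) :
    √(2 * (a ^ 2 + b ^ 2) + 2 * |a ^ 2 - b ^ 2|) = |a + b| + |a - b| := by
  have hsq : 2 * (a ^ 2 + b ^ 2) + 2 * |a ^ 2 - b ^ 2| = (|a + b| + |a - b|) ^ 2 := by
    rw [show a ^ 2 - b ^ 2 = (a + b) * (a - b) by ring, abs_mul, add_sq, sq_abs, sq_abs]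
    ring
  rw [hsq, Real.sqrt_sq (by positivity)]

theorem nuclearNorm_symW_eq {n : ℕ} (hn : 1 ≤ n) {a1 a2 b1 b2 : ℝ} (α : ℝ)
    (hlin : a1 + b1 + n * (a2 + b2) = 0) :
    nuclearNorm (symW n a1 a2 b1 b2 α (-α)) =
      ((n : ℝ) - 1) * (|a1 + b1| + |a1 - b1|) + 2 * √((a1 + n * a2) ^ 2 + n * α ^ 2) := by
  have : Nonempty (Fin n) := ⟨⟨0, hn⟩⟩
  set w := |a1 + b1|
  set u := |a1 - b1|
  set σ := 2 * √((a1 + n * a2) ^ 2 + n * α ^ 2) with hσ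
  have hw : 0 ≤ w := abs_nonneg _
  have hu : 0 ≤ u := abs_nonneg _
  have hσ0 : 0 ≤ σ := by positivity
  have hw2 : w ^ 2 = (a1 + b1) ^ 2 := sq_abs _
  have hu2 : u ^ 2 = (a1 - b1) ^ 2 := sq_abs _
  have hσ2 : σ ^ 2 = 4 * ((a1 + n * a2) ^ 2 + n * α ^ 2) := by
    rw [hσ, mul_pow, Real.sq_sqrt (by positivity)]
    ring
  set S := sym2Block (constSplit (Fin n) ((w + u) / 2) (σ / 2))
    (constSplit (Fin n) ((w - u) / 2) (-(σ / 2)))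
  have hS : S.PosSemidef := by
    refine PosSemidef.sym2Block ?_ ?_ <;>
      simp only [constSplit_add, constSplit_sub] <;>
      exact posSemidef_constSplit (by linarith) (by linarith)
  have hSW : S * S = (symW n a1 a2 b1 b2 α (-α))ᴴ * symW n a1 a2 b1 b2 α (-α) := by
    rw [sym2Block_mul, conjTranspose_symW_mul_symW, smul_one_add_smul_of_one,
      smul_one_add_smul_of_one]
    simp only [constSplit_mul, constSplit_add, Fintype.card_fin]
    congr 2
    · linear_combination (hw2 + hu2) / 2
    · linear_combination hσ2 / 2 + (a1 + n * a2 - b1 - n * b2) * hlin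
    · linear_combination (hw2 - hu2) / 2
    · linear_combination -hσ2 / 2 - 2 * (a1 + n * a2) * hlin
  rw [nuclearNorm_eq_trace_of_mul_self_eq hS hSW, trace_sym2Block, trace_constSplit,
    Fintype.card_fin]
  ring

/-- The nuclear norm of a symmetric-form matrix with `β = −α` and
`a1+b1+n·(a2+b2) = 0`, together with the structural simplification of its first term. -/
theorem nuclearNorm_symW (n : ℕ) (hn : 1 ≤ n) (a1 a2 b1 b2 α β : ℝ)
    (hβ : β = -α) (hlin : a1 + b1 + n * (a2 + b2) = 0) :
    nuclearNorm (symW n a1 a2 b1 b2 α β) =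
      ((n : ℝ) - 1) * Real.sqrt (2 * (a1 ^ 2 + b1 ^ 2) + 2 * |a1 ^ 2 - b1 ^ 2|) +
        2 * Real.sqrt ((a1 + n * a2) ^ 2 + n * α ^ 2) ∧
    ((n : ℝ) - 1) * Real.sqrt (2 * (a1 ^ 2 + b1 ^ 2) + 2 * |a1 ^ 2 - b1 ^ 2|) =
      2 * ((n : ℝ) - 1) * max |a1| |b1| := by
  subst hβ
  rw [Real.sqrt_two_mul_add_two_mul_abs_sq_sub]
  exact ⟨nuclearNorm_symW_eq hn α hlin, by rw [abs_add_add_abs_sub]; ring⟩
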